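/- Let X be a module over the commutative ring Λ = ℤ[t,s,r]/I where I is the ideal generated by s² − s(1−tr), 1 − t², 1 − r², (t+r)s, and (1−r)s. Then B(x,y) = (ty + sx, rx) defines an involutory birack structure on X: B is invertible, (τ₀B)² = id, the components of τ₀BΔ are bijections, and B satisfies the set-theoretic Yang–Baxter equation. -/

import Mathlib

open MvPolynomial

def sw {X : Type*} : X × X → X × X := fun p => (p.2, p.1)

def lmap {X : Type*} (B : X × X → X × X) : X × X × X → X × X × X :=
  fun p => ((B (p.1, p.2.1)).1, (B (p.1, p.2.1)).2, p.2.2)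

def rmap {X : Type*} (B : X × X → X × X) : X × X × X → X × X × X :=
  fun p => (p.1, B p.2)

def YBE {X : Type*} (B : X × X → X × X) : Prop :=
  lmap B ∘ rmap B ∘ lmap B = rmap B ∘ lmap B ∘ rmap B

/-- The ideal I = (s² − s(1−tr), 1−t², 1−r², (t+r)s, (1−r)s) in ℤ[t,s,r],
with t = X 0, s = X 1, r = X 2. -/
noncomputable def relIdeal : Ideal (MvPolynomial (Fin 3) ℤ) :=
  Ideal.span
    {X 1 ^ 2 - X 1 * (1 - X 0 * X 2), 1 - X 0 ^ 2, 1 - X 2 ^ 2,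
      (X 0 + X 2) * X 1, (1 - X 2) * X 1}

/-- Λ = ℤ[t,s,r]/I. -/
abbrev Lam : Type := MvPolynomial (Fin 3) ℤ ⧸ relIdeal

noncomputable def tΛ : Lam := Ideal.Quotient.mk relIdeal (X 0)
noncomputable def sΛ : Lam := Ideal.Quotient.mk relIdeal (X 1)
noncomputable def rΛ : Lam := Ideal.Quotient.mk relIdeal (X 2)

/-! With `t² = r² = 1` and `(t + r) s = 0`, the map `sw ∘ B : (x, y) ↦ (r x, t y + s x)` squares
to `(x, y + (t + r) s x) = (x, y)`, so it is an involution; hence `B` is bijective. On the diagonal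
its components are multiplication by `r` and by `t + s`, and `(t + s)² = 1` follows from all the
relations. Finally, the two sides of the Yang–Baxter equation differ only in the first coordinate,
by `(s² + t s r - s) x`, which is the first generator of the ideal applied to `x`. -/

theorem sw_involutive {X : Type*} : Function.Involutive (sw : X × X → X × X) := fun _ => rfl

section LinearBirack

variable {R M : Type*} [CommRing R] [AddCommGroup M] [Module R M]

def linearBirack (t s r : R) : M × M → M × M := fun p => (t • p.2 + s • p.1, r • p.1)

variable {t s r : R}

theorem involutive_sw_comp_linearBirack (ht : t ^ 2 = 1) (hr : r ^ 2 = 1)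
    (hts : (t + r) * s = 0) : Function.Involutive (sw ∘ linearBirack (M := M) t s r) := by
  rintro ⟨x, y⟩
  show (r • r • x, t • (t • y + s • x) + s • r • x) = (x, y)
  refine Prod.ext ?_ ?_
  · linear_combination (norm := module) hr • x
  · linear_combination (norm := module) ht • y + hts • x

theorem bijective_linearBirack (ht : t ^ 2 = 1) (hr : r ^ 2 = 1) (hts : (t + r) * s = 0) :
    Function.Bijective (linearBirack (M := M) t s r) :=
  (sw_involutive (X := M)).bijective.comp (involutive_sw_comp_linearBirack ht hr hts).bijective

theorem yBE_linearBirack (hs : s ^ 2 = s * (1 - t * r)) :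
    YBE (linearBirack (M := M) t s r) := by
  funext ⟨x, y, z⟩
  simp only [Function.comp_apply, lmap, rmap, linearBirack]
  refine Prod.ext ?_ (Prod.ext (by module) (by module))
  linear_combination (norm := module) hs • x

end LinearBirack

theorem mk_relIdeal_eq_zero {p : MvPolynomial (Fin 3) ℤ}
    (hp : p ∈ ({X 1 ^ 2 - X 1 * (1 - X 0 * X 2), 1 - X 0 ^ 2, 1 - X 2 ^ 2,
      (X 0 + X 2) * X 1, (1 - X 2) * X 1} : Set (MvPolynomial (Fin 3) ℤ))) :
    Ideal.Quotient.mk relIdeal p = 0 :=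
  Ideal.Quotient.eq_zero_iff_mem.mpr (Ideal.subset_span hp)

theorem sΛ_sq : sΛ ^ 2 = sΛ * (1 - tΛ * rΛ) :=
  sub_eq_zero.mp (mk_relIdeal_eq_zero (p := X 1 ^ 2 - X 1 * (1 - X 0 * X 2)) (by simp) :
    sΛ ^ 2 - sΛ * (1 - tΛ * rΛ) = 0)

theorem tΛ_sq : tΛ ^ 2 = 1 :=
  (sub_eq_zero.mp (mk_relIdeal_eq_zero (p := 1 - X 0 ^ 2) (by simp) : 1 - tΛ ^ 2 = 0)).symm

theorem rΛ_sq : rΛ ^ 2 = 1 :=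
  (sub_eq_zero.mp (mk_relIdeal_eq_zero (p := 1 - X 2 ^ 2) (by simp) : 1 - rΛ ^ 2 = 0)).symm

theorem tΛ_add_rΛ_mul_sΛ : (tΛ + rΛ) * sΛ = 0 :=
  mk_relIdeal_eq_zero (p := (X 0 + X 2) * X 1) (by simp)

theorem one_sub_rΛ_mul_sΛ : (1 - rΛ) * sΛ = 0 :=
  mk_relIdeal_eq_zero (p := (1 - X 2) * X 1) (by simp)

theorem tΛ_add_sΛ_sq : (tΛ + sΛ) ^ 2 = 1 := by
  linear_combination tΛ_sq + sΛ_sq + (2 - rΛ) * tΛ_add_rΛ_mul_sΛ + (1 - rΛ) * one_sub_rΛ_mul_sΛ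

/-- For any module M over Λ = ℤ[t,s,r]/I, the map B(x,y) = (ty + sx, rx)
is an involutory birack structure on M. -/
theorem stmt3 (M : Type*) [AddCommGroup M] [Module Lam M] :
    letI B : M × M → M × M := fun p => (tΛ • p.2 + sΛ • p.1, rΛ • p.1)
    Function.Bijective B ∧
      (sw ∘ B) ∘ (sw ∘ B) = id ∧
      Function.Bijective (fun x : M => ((sw ∘ B) (x, x)).1) ∧
      Function.Bijective (fun x : M => ((sw ∘ B) (x, x)).2) ∧
      YBE B := by
  show Function.Bijective (linearBirack (M := M) tΛ sΛ rΛ) ∧ _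
  refine ⟨bijective_linearBirack tΛ_sq rΛ_sq tΛ_add_rΛ_mul_sΛ,
    (involutive_sw_comp_linearBirack tΛ_sq rΛ_sq tΛ_add_rΛ_mul_sΛ).comp_self,
    (IsUnit.of_pow_eq_one rΛ_sq two_ne_zero).smul_bijective, ?_, yBE_linearBirack sΛ_sq⟩
  simpa only [sw, Function.comp_apply, linearBirack, ← add_smul]
    using (IsUnit.of_pow_eq_one tΛ_add_sΛ_sq two_ne_zero).smul_bijective
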